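/- Let γ ∈ [1/2, 1), let P be an S×S row-stochastic matrix, let r ∈ ℝ^S satisfy 0 ≤ r_s ≤ 1 for all s, let V ∈ ℝ^S be the unique solution of the Bellman equation V = r + γPV (acting on column vectors), let ρ ∈ ℝ^S be a probability row vector, and let d := (1−γ) ∑_{t=0}^{∞} γ^t ρP^t. Define v ∈ ℝ^S by v_s := (P(V∘V))_s − ((PV)_s)², the variance of V under the s-th row of P. Then ∑_s d_s v_s ≤ 14/(1−γ). -/

import Mathlib

/-! The occupancy vector satisfies `d = (1 - γ) ρ + γ dP`, so moving `P` onto `d` costs a factor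
`γ⁻¹` on nonnegative vectors: `γ (d ⬝ PW) ≤ d ⬝ W`. With `W = V∘V` this gives
`d ⬝ v ≤ d ⬝ (γ⁻¹ V² - (PV)²)`, and since `γ PV = V - r` the integrand is at most `2V/γ²`.
As `0 ≤ V ≤ 1/(1 - γ)` and `d` is a probability vector, `d ⬝ v ≤ 2/(γ²(1 - γ)) ≤ 8/(1 - γ)`. -/

open Matrix

section RowStochastic

variable {R n : Type*} [Fintype n] [DecidableEq n] [Semiring R] [PartialOrder R]
  [IsOrderedRing R] {M : Matrix n n R}

lemma sum_vecMul_of_mem_rowStochastic (hM : M ∈ rowStochastic R n) (x : n → R) :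
    ∑ j, (x ᵥ* M) j = ∑ j, x j := by
  rw [← dotProduct_one, ← dotProduct_one, ← dotProduct_mulVec, one_vecMul_of_mem_rowStochastic hM]

lemma vecMul_mem_stdSimplex {x : n → R} (hx : x ∈ stdSimplex R n) (hM : M ∈ rowStochastic R n) :
    x ᵥ* M ∈ stdSimplex R n :=
  ⟨nonneg_vecMul_of_mem_rowStochastic hM hx.1, (sum_vecMul_of_mem_rowStochastic hM x).trans hx.2⟩

lemma vecMul_pow_mem_stdSimplex {x : n → R} (hx : x ∈ stdSimplex R n)
    (hM : M ∈ rowStochastic R n) (t : ℕ) : x ᵥ* M ^ t ∈ stdSimplex R n :=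
  vecMul_mem_stdSimplex hx (pow_mem hM t)

lemma mulVec_apply_le_of_forall_le (hM : M ∈ rowStochastic R n) {v : n → R} {c : R}
    (hv : ∀ j, v j ≤ c) (i : n) : (M *ᵥ v) i ≤ c :=
  calc (M *ᵥ v) i = ∑ j, M i j * v j := rfl
    _ ≤ ∑ j, M i j * c := Finset.sum_le_sum fun j _ => mul_le_mul_of_nonneg_left (hv j) (hM.1 i j)
    _ = c := by rw [← Finset.sum_mul, sum_row_of_mem_rowStochastic hM, one_mul]

lemma le_mulVec_apply_of_forall_le (hM : M ∈ rowStochastic R n) {v : n → R} {c : R}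
    (hv : ∀ j, c ≤ v j) (i : n) : c ≤ (M *ᵥ v) i :=
  calc c = ∑ j, M i j * c := by rw [← Finset.sum_mul, sum_row_of_mem_rowStochastic hM, one_mul]
    _ ≤ ∑ j, M i j * v j := Finset.sum_le_sum fun j _ => mul_le_mul_of_nonneg_left (hv j) (hM.1 i j)
    _ = (M *ᵥ v) i := rfl

end RowStochastic

section DiscountedOccupancy

variable {n : Type*} [Fintype n] [DecidableEq n] {γ : ℝ} {ρ : n → ℝ} {P : Matrix n n ℝ}

noncomputable def discountedOccupancy (γ : ℝ) (ρ : n → ℝ) (P : Matrix n n ℝ) : n → ℝ :=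
  (1 - γ) • ∑' t : ℕ, γ ^ t • (ρ ᵥ* P ^ t)

lemma summable_pow_smul_vecMul_pow (hγ0 : 0 ≤ γ) (hγ1 : γ < 1) (hρ : ρ ∈ stdSimplex ℝ n)
    (hP : P ∈ rowStochastic ℝ n) : Summable fun t : ℕ => γ ^ t • (ρ ᵥ* P ^ t) := by
  refine Pi.summable.mpr fun s => ?_
  refine (summable_geometric_of_lt_one hγ0 hγ1).of_nonneg_of_le (fun t => ?_) (fun t => ?_)
  all_goals
    have hq := mem_Icc_of_mem_stdSimplex (vecMul_pow_mem_stdSimplex hρ hP t) s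
    simp only [Pi.smul_apply, smul_eq_mul]
  · exact mul_nonneg (pow_nonneg hγ0 t) hq.1
  · exact mul_le_of_le_one_right (pow_nonneg hγ0 t) hq.2

lemma discountedOccupancy_apply (hγ0 : 0 ≤ γ) (hγ1 : γ < 1) (hρ : ρ ∈ stdSimplex ℝ n)
    (hP : P ∈ rowStochastic ℝ n) (s : n) :
    discountedOccupancy γ ρ P s = (1 - γ) * ∑' t : ℕ, γ ^ t * (ρ ᵥ* P ^ t) s := by
  rw [discountedOccupancy, Pi.smul_apply,
    tsum_apply (summable_pow_smul_vecMul_pow hγ0 hγ1 hρ hP)]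
  rfl

lemma discountedOccupancy_eq_add_vecMul (hγ0 : 0 ≤ γ) (hγ1 : γ < 1) (hρ : ρ ∈ stdSimplex ℝ n)
    (hP : P ∈ rowStochastic ℝ n) :
    discountedOccupancy γ ρ P = (1 - γ) • ρ + γ • (discountedOccupancy γ ρ P ᵥ* P) := by
  set f : ℕ → n → ℝ := fun t => γ ^ t • (ρ ᵥ* P ^ t)
  obtain ⟨a, ha⟩ := summable_pow_smul_vecMul_pow hγ0 hγ1 hρ hP
  have hshift : HasSum (fun t => f (t + 1)) (γ • (a ᵥ* P)) := by
    have hf : (fun t => f (t + 1)) = fun t => γ • (f t ᵥ* P) := by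
      funext t
      simp only [f, smul_vecMul, vecMul_vecMul, pow_succ, smul_smul, mul_comm]
    rw [hf]
    exact (ha.map (vecMulLinear P) (vecMulLinear P).continuous_of_finiteDimensional).const_smul γ
  have ha_eq : a = ρ + γ • (a ᵥ* P) := by
    refine ha.unique ((hasSum_nat_add_iff' 1).mp ?_)
    simpa [f] using hshift
  have hd : discountedOccupancy γ ρ P = (1 - γ) • a := by rw [discountedOccupancy, ha.tsum_eq]
  rw [hd, smul_vecMul, smul_comm γ, ← smul_add, ← ha_eq]

lemma discountedOccupancy_mem_stdSimplex (hγ0 : 0 ≤ γ) (hγ1 : γ < 1) (hρ : ρ ∈ stdSimplex ℝ n)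
    (hP : P ∈ rowStochastic ℝ n) :
    discountedOccupancy γ ρ P ∈ stdSimplex ℝ n := by
  refine ⟨fun s => ?_, ?_⟩
  · rw [discountedOccupancy_apply hγ0 hγ1 hρ hP]
    exact mul_nonneg (sub_nonneg.mpr hγ1.le) (tsum_nonneg fun t =>
      mul_nonneg (pow_nonneg hγ0 t) ((vecMul_pow_mem_stdSimplex hρ hP t).1 s))
  · have h := congrArg (fun x => ∑ s, x s) (discountedOccupancy_eq_add_vecMul hγ0 hγ1 hρ hP)
    simp only [Pi.add_apply, Pi.smul_apply, smul_eq_mul, Finset.sum_add_distrib,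
      ← Finset.mul_sum, sum_vecMul_of_mem_rowStochastic hP, hρ.2] at h
    nlinarith

lemma mul_discountedOccupancy_dotProduct_mulVec_le (hγ0 : 0 ≤ γ) (hγ1 : γ < 1)
    (hρ : ρ ∈ stdSimplex ℝ n) (hP : P ∈ rowStochastic ℝ n) {w : n → ℝ} (hw : 0 ≤ w) :
    γ * (discountedOccupancy γ ρ P ⬝ᵥ (P *ᵥ w)) ≤ discountedOccupancy γ ρ P ⬝ᵥ w := by
  have h := congrArg (· ⬝ᵥ w) (discountedOccupancy_eq_add_vecMul hγ0 hγ1 hρ hP)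
  simp only [add_dotProduct, smul_dotProduct, smul_eq_mul, ← dotProduct_mulVec] at h
  have hρw : 0 ≤ ρ ⬝ᵥ w := dotProduct_nonneg_of_nonneg hρ.1 hw
  nlinarith

end DiscountedOccupancy

section ValueFunction

variable {n : Type*} [Fintype n] [DecidableEq n] {γ : ℝ} {P : Matrix n n ℝ} {r V : n → ℝ}

lemma value_nonneg (hγ0 : 0 ≤ γ) (hγ1 : γ < 1) (hP : P ∈ rowStochastic ℝ n)
    (hV : ∀ s, V s = r s + γ * (P *ᵥ V) s) (hr : ∀ s, 0 ≤ r s) (s : n) : 0 ≤ V s := by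
  have : Nonempty n := ⟨s⟩
  obtain ⟨s₀, hs₀⟩ := Finite.exists_min V
  have hPV : V s₀ ≤ (P *ᵥ V) s₀ := le_mulVec_apply_of_forall_le hP hs₀ s₀
  have : 0 ≤ V s₀ := by nlinarith [hV s₀, hr s₀]
  exact this.trans (hs₀ s)

lemma value_le_inv_one_sub (hγ0 : 0 ≤ γ) (hγ1 : γ < 1) (hP : P ∈ rowStochastic ℝ n)
    (hV : ∀ s, V s = r s + γ * (P *ᵥ V) s) (hr : ∀ s, r s ≤ 1) (s : n) : V s ≤ (1 - γ)⁻¹ := by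
  have : Nonempty n := ⟨s⟩
  obtain ⟨s₁, hs₁⟩ := Finite.exists_max V
  have hPV : (P *ᵥ V) s₁ ≤ V s₁ := mulVec_apply_le_of_forall_le hP hs₁ s₁
  have : V s₁ ≤ (1 - γ)⁻¹ := by
    rw [← one_div, le_div_iff₀ (sub_pos.mpr hγ1)]
    nlinarith [hV s₁, hr s₁]
  exact (hs₁ s).trans this

end ValueFunction

def nextStateVariance {n : Type*} [Fintype n] (P : Matrix n n ℝ) (V : n → ℝ) : n → ℝ :=
  P *ᵥ (V * V) - (P *ᵥ V) ^ 2

lemma inv_mul_sq_sub_sq_le {γ r v x : ℝ} (hγ0 : 0 < γ) (hγ1 : γ ≤ 1) (hr0 : 0 ≤ r) (hr1 : r ≤ 1)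
    (hv : 0 ≤ v) (h : v = r + γ * x) : γ⁻¹ * v ^ 2 - x ^ 2 ≤ 2 / γ ^ 2 * v := by
  have key : γ * v ^ 2 - (γ * x) ^ 2 ≤ 2 * v := by
    rw [show γ * x = v - r by linarith]
    nlinarith [mul_nonneg (sub_nonneg.mpr hγ1) (sq_nonneg v), mul_nonneg (sub_nonneg.mpr hr1) hv]
  calc γ⁻¹ * v ^ 2 - x ^ 2 = (γ * v ^ 2 - (γ * x) ^ 2) / γ ^ 2 := by field_simp
    _ ≤ 2 * v / γ ^ 2 := by gcongr
    _ = 2 / γ ^ 2 * v := by ring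

section Variance

variable {n : Type*} [Fintype n] [DecidableEq n] {γ : ℝ} {ρ : n → ℝ} {P : Matrix n n ℝ}
  {r V : n → ℝ}

lemma discountedOccupancy_dotProduct_nextStateVariance_le (hγ0 : 0 < γ) (hγ1 : γ < 1)
    (hρ : ρ ∈ stdSimplex ℝ n) (hP : P ∈ rowStochastic ℝ n) (hr : ∀ s, 0 ≤ r s ∧ r s ≤ 1)
    (hV : ∀ s, V s = r s + γ * (P *ᵥ V) s) :
    discountedOccupancy γ ρ P ⬝ᵥ nextStateVariance P V ≤ 2 / (γ ^ 2 * (1 - γ)) := by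
  set d := discountedOccupancy γ ρ P
  have hd := discountedOccupancy_mem_stdSimplex hγ0.le hγ1 hρ hP
  have hV0 := value_nonneg hγ0.le hγ1 hP hV fun s => (hr s).1
  have hV1 := value_le_inv_one_sub hγ0.le hγ1 hP hV fun s => (hr s).2
  have hshift := mul_discountedOccupancy_dotProduct_mulVec_le hγ0.le hγ1 hρ hP
    (w := V * V) fun s => mul_self_nonneg (V s)
  have hpoint : γ⁻¹ • (V * V) - (P *ᵥ V) ^ 2 ≤ (2 / γ ^ 2) • V := fun s => by
    simpa [sq] using inv_mul_sq_sub_sq_le hγ0 hγ1.le (hr s).1 (hr s).2 (hV0 s) (hV s)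
  calc d ⬝ᵥ nextStateVariance P V
      ≤ d ⬝ᵥ (γ⁻¹ • (V * V) - (P *ᵥ V) ^ 2) := by
        rw [nextStateVariance, dotProduct_sub, dotProduct_sub, dotProduct_smul, smul_eq_mul]
        have := (le_inv_mul_iff₀ hγ0).mpr hshift
        linarith
    _ ≤ d ⬝ᵥ ((2 / γ ^ 2) • V) := dotProduct_le_dotProduct_of_nonneg_left hpoint hd.1
    _ ≤ d ⬝ᵥ ((2 / γ ^ 2) • fun _ => (1 - γ)⁻¹) := by
        refine dotProduct_le_dotProduct_of_nonneg_left (fun s => ?_) hd.1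
        simp only [Pi.smul_apply, smul_eq_mul]
        gcongr
        exact hV1 s
    _ = 2 / (γ ^ 2 * (1 - γ)) := by
        rw [dotProduct_smul, smul_eq_mul]
        change 2 / γ ^ 2 * ∑ s, d s * (1 - γ)⁻¹ = _
        rw [← Finset.sum_mul, hd.2]
        field_simp

end Variance

theorem stmt12_general (S : ℕ) (γ : ℝ) (hγ0 : 1 / 2 ≤ γ) (hγ1 : γ < 1)
    (P : Matrix (Fin S) (Fin S) ℝ)
    (hP0 : ∀ s s', 0 ≤ P s s') (hP1 : ∀ s, ∑ s', P s s' = 1)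
    (r : Fin S → ℝ) (hr : ∀ s, 0 ≤ r s ∧ r s ≤ 1)
    (V : Fin S → ℝ) (hV : ∀ s, V s = r s + γ * (P *ᵥ V) s)
    (ρ : Fin S → ℝ) (hρ0 : ∀ s, 0 ≤ ρ s) (hρ1 : ∑ s, ρ s = 1) :
    letI d : Fin S → ℝ := fun s => (1 - γ) * ∑' t : ℕ, γ ^ t * (ρ ᵥ* (P ^ t)) s
    letI v : Fin S → ℝ := fun s => (P *ᵥ (V * V)) s - ((P *ᵥ V) s) ^ 2
    (∑ s, d s * v s) ≤ 14 / (1 - γ) := by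
  have hγpos : 0 < γ := by linarith
  have hρ : ρ ∈ stdSimplex ℝ (Fin S) := ⟨hρ0, hρ1⟩
  have hP : P ∈ rowStochastic ℝ (Fin S) := mem_rowStochastic_iff_sum.mpr ⟨hP0, hP1⟩
  calc _ = discountedOccupancy γ ρ P ⬝ᵥ nextStateVariance P V := by
        simp only [← discountedOccupancy_apply hγpos.le hγ1 hρ hP]
        rfl
    _ ≤ 2 / (γ ^ 2 * (1 - γ)) :=
      discountedOccupancy_dotProduct_nextStateVariance_le hγpos hγ1 hρ hP hr hV
    _ = 2 / γ ^ 2 / (1 - γ) := by rw [div_div]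
    _ ≤ 14 / (1 - γ) := by
      refine div_le_div_of_nonneg_right ?_ (by linarith)
      rw [div_le_iff₀ (by positivity)]
      nlinarith

/-- Let `γ ∈ [1/2,1)`, `P` an `S×S` row-stochastic matrix, `r ∈ [0,1]^S`, `V` the unique
solution of the Bellman equation `V = r + γPV`, `ρ` a probability row vector, and
`d := (1−γ) ∑_{t=0}^∞ γ^t ρP^t`.  With `v_s := (P(V∘V))_s − ((PV)_s)²` the variance of `V`
under the `s`-th row of `P`, it holds that `∑_s d_s v_s ≤ 14/(1−γ)`. -/
theorem stmt12 (S : ℕ) (hS : 0 < S) (γ : ℝ) (hγ0 : 1 / 2 ≤ γ) (hγ1 : γ < 1)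
    (P : Matrix (Fin S) (Fin S) ℝ)
    (hP0 : ∀ s s', 0 ≤ P s s') (hP1 : ∀ s, ∑ s', P s s' = 1)
    (r : Fin S → ℝ) (hr : ∀ s, 0 ≤ r s ∧ r s ≤ 1)
    (V : Fin S → ℝ) (hV : ∀ s, V s = r s + γ * (P *ᵥ V) s)
    (ρ : Fin S → ℝ) (hρ0 : ∀ s, 0 ≤ ρ s) (hρ1 : ∑ s, ρ s = 1) :
    letI d : Fin S → ℝ := fun s => (1 - γ) * ∑' t : ℕ, γ ^ t * (ρ ᵥ* (P ^ t)) s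
    letI v : Fin S → ℝ := fun s => (P *ᵥ (V * V)) s - ((P *ᵥ V) s) ^ 2
    (∑ s, d s * v s) ≤ 14 / (1 - γ) :=
  stmt12_general S γ hγ0 hγ1 P hP0 hP1 r hr V hV ρ hρ0 hρ1
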